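/- arXiv:2310.17844 — 3 statements merged into one kernel-verified Lean document; each statement's English description precedes it below -/
import Mathlib

section
/- Let G, Ĝ be real p×n matrices, let Σ_η be a real symmetric positive definite p×p matrix, let Σ_ω be a real symmetric positive definite n×n matrix, and let α ∈ (0,1]. Let C and Ĉ be real symmetric positive definite n×n matrices satisfying the fixed-point equations C⁻¹ = Gᵀ Σ_η⁻¹ G + (α² C + Σ_ω)⁻¹ and Ĉ⁻¹ = Ĝᵀ Σ_η⁻¹ Ĝ + (α² Ĉ + Σ_ω)⁻¹. Suppose ε > 0 and H > 0 satisfy ‖Ĝ − G‖₂ ≤ ε, ‖G‖₂ ≤ H, ‖Ĝ‖₂ ≤ H, and suppose there exists β ∈ [0,1) with ‖(α² C + Σ_ω)⁻¹ − (α² Ĉ + Σ_ω)⁻¹‖₂ ≤ β ‖C⁻¹ − Ĉ⁻¹‖₂. Then ‖C⁻¹ − Ĉ⁻¹‖₂ ≤ 2 ε H ‖Σ_η⁻¹‖₂ / (1 − β). -/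
open Matrix
open scoped Matrix.Norms.L2Operator

noncomputable def specNorm {m n : ℕ} (A : Matrix (Fin m) (Fin n) ℝ) : ℝ :=
  ‖LinearMap.toContinuousLinearMap (Matrix.toEuclideanLin A)‖

lemma specNorm_eq {m n : ℕ} (A : Matrix (Fin m) (Fin n) ℝ) : specNorm A = ‖A‖ := rfl

lemma transpose_l2norm {m n : ℕ} (A : Matrix (Fin m) (Fin n) ℝ) : ‖Aᵀ‖ = ‖A‖ := by
  have : Aᵀ = Aᴴ := by ext i j; simp [Matrix.conjTranspose]
  rw [this, Matrix.l2_opNorm_conjTranspose]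

theorem stmt_3 {p n : ℕ} (G Ghat : Matrix (Fin p) (Fin n) ℝ)
    (Sη : Matrix (Fin p) (Fin p) ℝ) (hSη : Sη.PosDef)
    (Sω : Matrix (Fin n) (Fin n) ℝ) (hSω : Sω.PosDef)
    (α : ℝ) (hα0 : 0 < α) (hα1 : α ≤ 1)
    (C Chat : Matrix (Fin n) (Fin n) ℝ) (hC : C.PosDef) (hChat : Chat.PosDef)
    (hfixC : C⁻¹ = Gᵀ * Sη⁻¹ * G + (α ^ 2 • C + Sω)⁻¹)
    (hfixChat : Chat⁻¹ = Ghatᵀ * Sη⁻¹ * Ghat + (α ^ 2 • Chat + Sω)⁻¹)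
    (ε H : ℝ) (hε : 0 < ε) (hH : 0 < H)
    (hGG : specNorm (Ghat - G) ≤ ε)
    (hG : specNorm G ≤ H) (hGhat : specNorm Ghat ≤ H)
    (β : ℝ) (hβ0 : 0 ≤ β) (hβ1 : β < 1)
    (hcontr : specNorm ((α ^ 2 • C + Sω)⁻¹ - (α ^ 2 • Chat + Sω)⁻¹) ≤
      β * specNorm (C⁻¹ - Chat⁻¹)) :
    specNorm (C⁻¹ - Chat⁻¹) ≤ 2 * ε * H * specNorm Sη⁻¹ / (1 - β) := by
  simp only [specNorm_eq] at *
  set S := Sη⁻¹ with hS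
  have key : C⁻¹ - Chat⁻¹ = Gᵀ * S * (G - Ghat) + (G - Ghat)ᵀ * S * Ghat
      + ((α ^ 2 • C + Sω)⁻¹ - (α ^ 2 • Chat + Sω)⁻¹) := by
    have expand : Gᵀ * S * (G - Ghat) + (G - Ghat)ᵀ * S * Ghat
        = Gᵀ * S * G - Ghatᵀ * S * Ghat := by
      rw [Matrix.transpose_sub, Matrix.mul_sub, Matrix.sub_mul, Matrix.sub_mul]
      abel
    rw [hfixC, hfixChat, expand]
    abel
  have hGsub : ‖G - Ghat‖ ≤ ε := by rwa [norm_sub_rev]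
  have h1 : ‖Gᵀ * S * (G - Ghat)‖ ≤ H * ‖S‖ * ε := by
    calc ‖Gᵀ * S * (G - Ghat)‖ ≤ ‖Gᵀ * S‖ * ‖G - Ghat‖ := Matrix.l2_opNorm_mul _ _
      _ ≤ (‖Gᵀ‖ * ‖S‖) * ‖G - Ghat‖ :=
          mul_le_mul_of_nonneg_right (Matrix.l2_opNorm_mul _ _) (norm_nonneg _)
      _ ≤ H * ‖S‖ * ε := by
          rw [transpose_l2norm]
          gcongr
  have h2 : ‖(G - Ghat)ᵀ * S * Ghat‖ ≤ ε * ‖S‖ * H := by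
    calc ‖(G - Ghat)ᵀ * S * Ghat‖ ≤ ‖(G - Ghat)ᵀ * S‖ * ‖Ghat‖ := Matrix.l2_opNorm_mul _ _
      _ ≤ (‖(G - Ghat)ᵀ‖ * ‖S‖) * ‖Ghat‖ :=
          mul_le_mul_of_nonneg_right (Matrix.l2_opNorm_mul _ _) (norm_nonneg _)
      _ ≤ ε * ‖S‖ * H := by
          rw [transpose_l2norm]
          gcongr
  have hmain : ‖C⁻¹ - Chat⁻¹‖ ≤ H * ‖S‖ * ε + ε * ‖S‖ * H + β * ‖C⁻¹ - Chat⁻¹‖ := by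
    calc ‖C⁻¹ - Chat⁻¹‖
        = ‖Gᵀ * S * (G - Ghat) + (G - Ghat)ᵀ * S * Ghat
          + ((α ^ 2 • C + Sω)⁻¹ - (α ^ 2 • Chat + Sω)⁻¹)‖ := by rw [← key]
      _ ≤ ‖Gᵀ * S * (G - Ghat) + (G - Ghat)ᵀ * S * Ghat‖
          + ‖(α ^ 2 • C + Sω)⁻¹ - (α ^ 2 • Chat + Sω)⁻¹‖ := norm_add_le _ _
      _ ≤ (‖Gᵀ * S * (G - Ghat)‖ + ‖(G - Ghat)ᵀ * S * Ghat‖)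
          + ‖(α ^ 2 • C + Sω)⁻¹ - (α ^ 2 • Chat + Sω)⁻¹‖ := by
            gcongr; exact norm_add_le _ _
      _ ≤ H * ‖S‖ * ε + ε * ‖S‖ * H + β * ‖C⁻¹ - Chat⁻¹‖ := by linarith
  rw [le_div_iff₀ (by linarith : (0:ℝ) < 1 - β)]
  nlinarith [norm_nonneg (C⁻¹ - Chat⁻¹)]
end

section
/- Let Σ_η be a real symmetric positive definite p×p matrix, Σ_ω a real symmetric positive definite n×n matrix, Ĉ a real symmetric positive definite n×n matrix, α ∈ (0,1], and Ĝ a real p×n matrix such that Ĝᵀ Σ_η⁻¹ Ĝ is positive definite and ‖Ĝ‖₂ ≤ H for some H > 0. If the vector r̂ ∈ ℝⁿ satisfies (Ĝᵀ Σ_η⁻¹ Ĝ + (1 − α)(α² Ĉ + Σ_ω)⁻¹) r̂ = Ĝᵀ Σ_η⁻¹ y for a vector y ∈ ℝᵖ, then ‖r̂‖₂ ≤ H · ‖(Ĝᵀ Σ_η⁻¹ Ĝ)⁻¹‖₂ · ‖Σ_η⁻¹ y‖₂. -/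
/-!
Write `M = Ĝᵀ Σ_η⁻¹ Ĝ`. The regularizer `(1 - α)(α² Ĉ + Σ_ω)⁻¹` is positive semidefinite, so
pairing the equation with `r̂` and dropping it gives
`r̂ᵀ M r̂ ≤ (Ĝ r̂)ᵀ Σ_η⁻¹ y ≤ H ‖r̂‖ ‖Σ_η⁻¹ y‖`. For positive definite `M` one has
`‖r̂‖² ≤ ‖M⁻¹‖ r̂ᵀ M r̂`, and dividing by `‖r̂‖` gives the bound.
-/

open Matrix

/-- The Euclidean norm of a real vector. -/
noncomputable def eucNorm {n : ℕ} (v : Fin n → ℝ) : ℝ :=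
  ‖(EuclideanSpace.equiv (Fin n) ℝ).symm v‖

section EuclideanNorms

variable {m n : ℕ}

lemma eucNorm_nonneg (v : Fin n → ℝ) : 0 ≤ eucNorm v := norm_nonneg _

lemma specNorm_nonneg (A : Matrix (Fin m) (Fin n) ℝ) : 0 ≤ specNorm A := norm_nonneg _

lemma eucNorm_sq (v : Fin n → ℝ) : eucNorm v ^ 2 = v ⬝ᵥ v := by
  rw [eucNorm, ← real_inner_self_eq_norm_sq, EuclideanSpace.inner_eq_star_dotProduct]
  simp

lemma dotProduct_le_eucNorm_mul_eucNorm (u w : Fin n → ℝ) : u ⬝ᵥ w ≤ eucNorm u * eucNorm w := by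
  simpa [eucNorm, EuclideanSpace.inner_eq_star_dotProduct, dotProduct_comm u] using
    real_inner_le_norm ((EuclideanSpace.equiv (Fin n) ℝ).symm u)
      ((EuclideanSpace.equiv (Fin n) ℝ).symm w)

lemma eucNorm_mulVec_le (A : Matrix (Fin m) (Fin n) ℝ) (v : Fin n → ℝ) :
    eucNorm (A *ᵥ v) ≤ specNorm A * eucNorm v :=
  (LinearMap.toContinuousLinearMap (toEuclideanLin A)).le_opNorm _

open scoped Matrix.Norms.L2Operator in
lemma specNorm_transpose_mul_self (A : Matrix (Fin m) (Fin n) ℝ) :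
    specNorm (Aᵀ * A) = specNorm A ^ 2 := by
  rw [sq]
  exact l2_opNorm_conjTranspose_mul_self A

end EuclideanNorms

lemma dotProduct_mulVec_le_of_add_posSemidef {ι κ : Type*} [Fintype ι] [Fintype κ]
    {M R : Matrix ι ι ℝ} (hR : R.PosSemidef) (G : Matrix κ ι ℝ) {r : ι → ℝ} {z : κ → ℝ}
    (h : (M + R) *ᵥ r = Gᵀ *ᵥ z) : r ⬝ᵥ M *ᵥ r ≤ (G *ᵥ r) ⬝ᵥ z := by
  have hRr : 0 ≤ r ⬝ᵥ R *ᵥ r := by simpa using hR.dotProduct_mulVec_nonneg r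
  have hGr : r ⬝ᵥ Gᵀ *ᵥ z = (G *ᵥ r) ⬝ᵥ z := by
    rw [dotProduct_mulVec, vecMul_transpose]
  rw [← hGr, ← h, add_mulVec, dotProduct_add]
  linarith

open scoped MatrixOrder in
/- With `T = √(M⁻¹)` we have `v = T (T (M v))`, `‖T (M v)‖² = vᵀ M v`, and `‖T‖² = ‖M⁻¹‖`
by the C⋆-identity. -/
lemma Matrix.PosDef.eucNorm_sq_le_specNorm_inv_mul {n : ℕ} {M : Matrix (Fin n) (Fin n) ℝ}
    (hM : M.PosDef) (v : Fin n → ℝ) : eucNorm v ^ 2 ≤ specNorm M⁻¹ * (v ⬝ᵥ M *ᵥ v) := by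
  set T := CFC.sqrt M⁻¹
  have hT : T.PosSemidef := (CFC.sqrt_nonneg M⁻¹).posSemidef
  have hTT : T * T = M⁻¹ := CFC.sqrt_mul_sqrt_self M⁻¹ hM.inv.posSemidef.nonneg
  have hTsymm : Tᵀ = T := hT.isHermitian
  have hMinvM : M⁻¹ * M = 1 := nonsing_inv_mul M hM.det_pos.ne'.isUnit
  set w := T *ᵥ (M *ᵥ v)
  have hv : v = T *ᵥ w := by
    rw [mulVec_mulVec, hTT, mulVec_mulVec, hMinvM, one_mulVec]
  have hw : eucNorm w ^ 2 = v ⬝ᵥ M *ᵥ v := by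
    rw [eucNorm_sq, dotProduct_mulVec, ← mulVec_transpose, hTsymm, mulVec_mulVec, hTT,
      mulVec_mulVec, hMinvM, one_mulVec, dotProduct_comm]
  calc eucNorm v ^ 2 = eucNorm (T *ᵥ w) ^ 2 := by rw [← hv]
    _ ≤ (specNorm T * eucNorm w) ^ 2 := by
      gcongr
      · exact eucNorm_nonneg _
      · exact eucNorm_mulVec_le T w
    _ = specNorm M⁻¹ * (v ⬝ᵥ M *ᵥ v) := by
      rw [mul_pow, ← specNorm_transpose_mul_self, hTsymm, hTT, hw]

theorem stmt_8_general {p n : ℕ} (Sη : Matrix (Fin p) (Fin p) ℝ)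
    (Sω : Matrix (Fin n) (Fin n) ℝ) (hSω : Sω.PosDef)
    (Chat : Matrix (Fin n) (Fin n) ℝ) (hChat : Chat.PosDef)
    (α : ℝ) (hα1 : α ≤ 1)
    (Ghat : Matrix (Fin p) (Fin n) ℝ) (hGhatPD : (Ghatᵀ * Sη⁻¹ * Ghat).PosDef)
    (H : ℝ) (hGhat : specNorm Ghat ≤ H)
    (rhat : Fin n → ℝ) (y : Fin p → ℝ)
    (heq : (Ghatᵀ * Sη⁻¹ * Ghat + (1 - α) • (α ^ 2 • Chat + Sω)⁻¹) *ᵥ rhat =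
      (Ghatᵀ * Sη⁻¹) *ᵥ y) :
    eucNorm rhat ≤ H * specNorm (Ghatᵀ * Sη⁻¹ * Ghat)⁻¹ * eucNorm (Sη⁻¹ *ᵥ y) := by
  set M := Ghatᵀ * Sη⁻¹ * Ghat
  set z := Sη⁻¹ *ᵥ y
  have hR : ((1 - α) • (α ^ 2 • Chat + Sω)⁻¹).PosSemidef :=
    (PosDef.posSemidef_add (hChat.posSemidef.smul (sq_nonneg α)) hSω).inv.posSemidef.smul
      (sub_nonneg.mpr hα1)
  rw [← mulVec_mulVec] at heq
  have hquad : rhat ⬝ᵥ M *ᵥ rhat ≤ H * eucNorm rhat * eucNorm z :=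
    calc _ ≤ (Ghat *ᵥ rhat) ⬝ᵥ z := dotProduct_mulVec_le_of_add_posSemidef hR Ghat heq
      _ ≤ eucNorm (Ghat *ᵥ rhat) * eucNorm z := dotProduct_le_eucNorm_mul_eucNorm _ _
      _ ≤ H * eucNorm rhat * eucNorm z := by
        gcongr
        · exact eucNorm_nonneg _
        · exact (eucNorm_mulVec_le Ghat rhat).trans (by gcongr; exact eucNorm_nonneg _)
  have hsq : eucNorm rhat ^ 2 ≤ (H * specNorm M⁻¹ * eucNorm z) * eucNorm rhat :=
    calc _ ≤ specNorm M⁻¹ * (rhat ⬝ᵥ M *ᵥ rhat) := hGhatPD.eucNorm_sq_le_specNorm_inv_mul rhat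
      _ ≤ specNorm M⁻¹ * (H * eucNorm rhat * eucNorm z) := by
          gcongr
          exact specNorm_nonneg _
      _ = _ := by ring
  have hbound_nonneg : 0 ≤ H * specNorm M⁻¹ * eucNorm z :=
    mul_nonneg (mul_nonneg ((specNorm_nonneg Ghat).trans hGhat) (specNorm_nonneg _))
      (eucNorm_nonneg _)
  nlinarith [eucNorm_nonneg rhat]

theorem stmt_8 {p n : ℕ} (Sη : Matrix (Fin p) (Fin p) ℝ) (hSη : Sη.PosDef)
    (Sω : Matrix (Fin n) (Fin n) ℝ) (hSω : Sω.PosDef)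
    (Chat : Matrix (Fin n) (Fin n) ℝ) (hChat : Chat.PosDef)
    (α : ℝ) (hα0 : 0 < α) (hα1 : α ≤ 1)
    (Ghat : Matrix (Fin p) (Fin n) ℝ) (hGhatPD : (Ghatᵀ * Sη⁻¹ * Ghat).PosDef)
    (H : ℝ) (hH : 0 < H) (hGhat : specNorm Ghat ≤ H)
    (rhat : Fin n → ℝ) (y : Fin p → ℝ)
    (heq : (Ghatᵀ * Sη⁻¹ * Ghat + (1 - α) • (α ^ 2 • Chat + Sω)⁻¹) *ᵥ rhat =
      (Ghatᵀ * Sη⁻¹) *ᵥ y) :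
    eucNorm rhat ≤ H * specNorm (Ghatᵀ * Sη⁻¹ * Ghat)⁻¹ * eucNorm (Sη⁻¹ *ᵥ y) :=
  stmt_8_general Sη Sω hSω Chat hChat α hα1 Ghat hGhatPD H hGhat rhat y heq
end

section
/- Let Σ_η be a real symmetric positive definite p×p matrix, Σ_ω a real symmetric positive definite n×n matrix, G a real p×n matrix with Gᵀ Σ_η⁻¹ G positive definite, α ∈ (0,1], and C a real symmetric positive definite n×n matrix satisfying C⁻¹ = Gᵀ Σ_η⁻¹ G + (α² C + Σ_ω)⁻¹. Then the matrix C⁻¹ − α (α² C + Σ_ω)⁻¹ is invertible and ‖(C⁻¹ − α (α² C + Σ_ω)⁻¹)⁻¹‖₂ ≤ ‖(Gᵀ Σ_η⁻¹ G)⁻¹‖₂. -/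
open Matrix

/-!
Write `A = Gᵀ Sη⁻¹ G` and `D = α² C + Sω`. The fixed-point equation gives
`C⁻¹ - α D⁻¹ = A + (1 - α) D⁻¹ ≥ A` in the Loewner order, so the claim is an instance of the
antitonicity of `M ↦ ‖M⁻¹‖` on positive definite matrices. For a positive operator `T` with right
inverse `S` and `c = ‖S‖`, expanding `0 ≤ ⟪T (c x - S x), c x - S x⟫` gives `‖x‖² ≤ c ⟪T x, x⟫`;
if `T ≤ U` this yields `‖x‖² ≤ c ⟪U x, x⟫ ≤ c ‖U x‖ ‖x‖`, i.e. `‖U⁻¹‖ ≤ c`.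
-/

open scoped RealInnerProductSpace

namespace ContinuousLinearMap

variable {E : Type*} [NormedAddCommGroup E] [InnerProductSpace ℝ E]

theorem IsPositive.norm_sq_le_opNorm_mul_inner {T S : E →L[ℝ] E} (hT : T.IsPositive)
    (hTS : Function.RightInverse S T) (x : E) : ‖x‖ ^ 2 ≤ ‖S‖ * ⟪T x, x⟫ := by
  set c := ‖S‖
  have hSx : ⟪x, S x⟫ ≤ c * ‖x‖ ^ 2 := by
    calc ⟪x, S x⟫ ≤ ‖x‖ * ‖S x‖ := real_inner_le_norm _ _
      _ ≤ ‖x‖ * (c * ‖x‖) := by gcongr; exact S.le_opNorm x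
      _ = c * ‖x‖ ^ 2 := by ring
  have hquad : 0 ≤ c ^ 2 * ⟪T x, x⟫ - 2 * c * ‖x‖ ^ 2 + ⟪x, S x⟫ := by
    have h := hT.inner_nonneg_left (c • x - S x)
    have hsymm : ⟪T x, S x⟫ = ⟪x, x⟫ := by rw [hT.inner_left_eq_inner_right, hTS x]
    simp only [map_sub, map_smul, hTS x, inner_sub_left, inner_sub_right, inner_smul_left,
      inner_smul_right, RCLike.conj_to_real, hsymm, real_inner_self_eq_norm_sq] at h
    nlinarith
  rcases (norm_nonneg S).eq_or_lt with hc | hc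
  · have hS : S = 0 := norm_eq_zero.mp hc.symm
    have hx : x = 0 := by simpa [hS] using (hTS x).symm
    simp [hx]
  · nlinarith

theorem IsPositive.opNorm_rightInverse_le_of_le {T U S V : E →L[ℝ] E} (hT : T.IsPositive)
    (hTU : T ≤ U) (hTS : Function.RightInverse S T) (hUV : Function.RightInverse V U) :
    ‖V‖ ≤ ‖S‖ := by
  refine opNorm_le_bound _ (norm_nonneg S) fun y => ?_
  set x := V y
  have hTUx : ⟪T x, x⟫ ≤ ⟪U x, x⟫ := by
    simpa [inner_sub_left] using hTU.inner_nonneg_left x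
  have h : ‖x‖ ^ 2 ≤ ‖S‖ * ‖y‖ * ‖x‖ := by
    calc ‖x‖ ^ 2 ≤ ‖S‖ * ⟪T x, x⟫ := hT.norm_sq_le_opNorm_mul_inner hTS x
      _ ≤ ‖S‖ * ⟪U x, x⟫ := by gcongr
      _ ≤ ‖S‖ * (‖U x‖ * ‖x‖) := by gcongr; exact real_inner_le_norm _ _
      _ = ‖S‖ * ‖y‖ * ‖x‖ := by rw [hUV y]; ring
  rcases (norm_nonneg x).eq_or_lt with hx | hx
  · rw [← hx]; positivity
  · nlinarith

end ContinuousLinearMap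

namespace Matrix

section toEuclideanCLM

open scoped ComplexOrder

variable {ι 𝕜 : Type*} [Fintype ι] [DecidableEq ι] [RCLike 𝕜]

theorem isPositive_toEuclideanCLM {A : Matrix ι ι 𝕜} (hA : A.PosSemidef) :
    (toEuclideanCLM (𝕜 := 𝕜) A).IsPositive :=
  (ContinuousLinearMap.isPositive_toLinearMap_iff _).mp (isPositive_toEuclideanLin_iff.mpr hA)

theorem rightInverse_toEuclideanCLM_inv {A : Matrix ι ι 𝕜} (hA : IsUnit A) :
    Function.RightInverse (toEuclideanCLM (𝕜 := 𝕜) A⁻¹) (toEuclideanCLM (𝕜 := 𝕜) A) :=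
  fun x => by
    have hAA : A * A⁻¹ = 1 := mul_nonsing_inv A ((isUnit_iff_isUnit_det A).mp hA)
    simpa using congr(toEuclideanCLM (𝕜 := 𝕜) $hAA x)

end toEuclideanCLM

theorem specNorm_inv_le_of_posSemidef_sub {n : ℕ} {A M : Matrix (Fin n) (Fin n) ℝ}
    (hA : A.PosDef) (hAM : (M - A).PosSemidef) : specNorm M⁻¹ ≤ specNorm A⁻¹ := by
  have hM : M.PosDef := by simpa using hA.add_posSemidef hAM
  refine (isPositive_toEuclideanCLM hA.posSemidef).opNorm_rightInverse_le_of_le ?_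
    (rightInverse_toEuclideanCLM_inv hA.isUnit) (rightInverse_toEuclideanCLM_inv hM.isUnit)
  rw [ContinuousLinearMap.le_def, ← map_sub]
  exact isPositive_toEuclideanCLM hAM

end Matrix

theorem stmt_10_general {p n : ℕ} (Sη : Matrix (Fin p) (Fin p) ℝ)
    (Sω : Matrix (Fin n) (Fin n) ℝ) (hSω : Sω.PosDef)
    (G : Matrix (Fin p) (Fin n) ℝ) (hG : (Gᵀ * Sη⁻¹ * G).PosDef)
    (α : ℝ) (hα1 : α ≤ 1)
    (C : Matrix (Fin n) (Fin n) ℝ) (hC : C.PosDef)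
    (hfix : C⁻¹ = Gᵀ * Sη⁻¹ * G + (α ^ 2 • C + Sω)⁻¹) :
    IsUnit (C⁻¹ - α • (α ^ 2 • C + Sω)⁻¹) ∧
    specNorm (C⁻¹ - α • (α ^ 2 • C + Sω)⁻¹)⁻¹ ≤ specNorm (Gᵀ * Sη⁻¹ * G)⁻¹ := by
  set D := α ^ 2 • C + Sω
  have hD : D⁻¹.PosSemidef := ((hC.posSemidef.smul (sq_nonneg α)).add hSω.posSemidef).inv
  have hsub : (C⁻¹ - α • D⁻¹ - Gᵀ * Sη⁻¹ * G).PosSemidef := by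
    rw [hfix, show Gᵀ * Sη⁻¹ * G + D⁻¹ - α • D⁻¹ - Gᵀ * Sη⁻¹ * G = (1 - α) • D⁻¹ by module]
    exact hD.smul (sub_nonneg.mpr hα1)
  have hpos : (C⁻¹ - α • D⁻¹).PosDef := by simpa using hG.add_posSemidef hsub
  exact ⟨hpos.isUnit, specNorm_inv_le_of_posSemidef_sub hG hsub⟩

theorem stmt_10 {p n : ℕ} (Sη : Matrix (Fin p) (Fin p) ℝ) (hSη : Sη.PosDef)
    (Sω : Matrix (Fin n) (Fin n) ℝ) (hSω : Sω.PosDef)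
    (G : Matrix (Fin p) (Fin n) ℝ) (hG : (Gᵀ * Sη⁻¹ * G).PosDef)
    (α : ℝ) (hα0 : 0 < α) (hα1 : α ≤ 1)
    (C : Matrix (Fin n) (Fin n) ℝ) (hC : C.PosDef)
    (hfix : C⁻¹ = Gᵀ * Sη⁻¹ * G + (α ^ 2 • C + Sω)⁻¹) :
    IsUnit (C⁻¹ - α • (α ^ 2 • C + Sω)⁻¹) ∧
    specNorm (C⁻¹ - α • (α ^ 2 • C + Sω)⁻¹)⁻¹ ≤ specNorm (Gᵀ * Sη⁻¹ * G)⁻¹ :=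
  stmt_10_general Sη Sω hSω G hG α hα1 C hC hfix
end
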